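/- arXiv:math/0512164 — 3 statements merged into one kernel-verified Lean document; each statement's English description precedes it below -/
import Mathlib

section
/- Let G be a finite undirected graph without loops and without isolated vertices on vertex set {1,...,n}. The number d(G) of orientations of G without sources and sinks equals ∑_{m=0}^{n} (-1)^m ∑_{P} 2^{μ(P)+k(P)}, where the inner sum is over all m-element vertex subsets P such that the induced subgraph ⟨P⟩ is bipartite, μ(P) is the number of edges of G with both endpoints outside P, and k(P) is the number of connected components of ⟨P⟩. -/
open Finset
open scoped Classical

variable {V : Type*} [Fintype V] [DecidableEq V]

lemma sym2_out_cases {i j : V} (h : i ≠ j) :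
    ((s(i,j) : Sym2 V).out = (i, j) ∧ (s(i,j) : Sym2 V).out ≠ (j, i)) ∨
    ((s(i,j) : Sym2 V).out = (j, i) ∧ (s(i,j) : Sym2 V).out ≠ (i, j)) := by
  have h1 : s((s(i,j) : Sym2 V).out.1, (s(i,j) : Sym2 V).out.2) = s(((i, j) : V × V).1, ((i, j) : V × V).2) :=
    Quot.out_eq _
  have hne : ((i, j) : V × V) ≠ (j, i) := by
    simp [Prod.ext_iff]; rintro rfl; exact fun _ => h rfl
  rcases Sym2.mk_eq_mk_iff.mp h1 with h2 | h2
  · exact Or.inl ⟨h2, by rw [h2]; exact hne⟩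
  · exact Or.inr ⟨h2, by rw [h2]; exact hne.symm⟩

noncomputable def orientEquiv (H : SimpleGraph V) :
    {o : V → V → Bool // (∀ i j, o i j = true → H.Adj i j) ∧
      (∀ i j, H.Adj i j → (o i j = true ↔ ¬ o j i = true))} ≃ (H.edgeFinset → Bool) where
  toFun o := fun e => o.1 e.1.out.1 e.1.out.2
  invFun f := ⟨fun i j => if h : H.Adj i j then
      (if (s(i,j) : Sym2 V).out = (i, j) then f ⟨s(i,j), by simpa using h⟩
       else ! f ⟨s(i,j), by simpa using h⟩) else false, by
    constructor
    · intro i j hij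
      by_contra h
      simp [h] at hij
    · intro i j h
      have hne := h.ne
      have hswap : (s(j,i) : Sym2 V) = s(i,j) := Sym2.eq_swap
      rcases sym2_out_cases hne with ⟨h1, h2⟩ | ⟨h1, h2⟩
      · simp only [dif_pos h, dif_pos h.symm, if_pos h1, hswap]
        rw [if_neg (by simpa [hswap] using h2)]
        simp
      · simp only [dif_pos h, dif_pos h.symm, if_neg h2, hswap]
        rw [if_pos (by simpa [hswap] using h1)]
        simp⟩
  left_inv := by
    rintro ⟨o, ho1, ho2⟩
    ext i j
    by_cases h : H.Adj i j
    · simp only [dif_pos h]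
      rcases sym2_out_cases h.ne with ⟨h1, _⟩ | ⟨h1, h2⟩
      · rw [if_pos h1, h1]
      · rw [if_neg h2, h1]
        have := ho2 i j h
        cases hji : o j i <;> cases hij : o i j <;> simp_all
    · simp only [dif_neg h]
      by_contra hc
      exact h (ho1 i j (by simp at hc; simp [hc]))
  right_inv := by
    intro f
    ext ⟨e, he⟩
    obtain ⟨a, b, hab⟩ : ∃ a b, e.out = (a, b) := ⟨e.out.1, e.out.2, rfl⟩
    have heq : s(a, b) = e := by have := Quot.out_eq e; rw [hab] at this; exact this
    have hadj : H.Adj a b := by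
      rw [SimpleGraph.mem_edgeFinset, ← heq, SimpleGraph.mem_edgeSet] at he
      exact he
    simp only [hab]
    rw [dif_pos hadj]
    have : (s(a,b) : Sym2 V).out = (a, b) := by rw [heq, hab]
    rw [if_pos this]
    congr 1
    exact Subtype.ext heq

lemma card_orient (H : SimpleGraph V) :
    Fintype.card {o : V → V → Bool // (∀ i j, o i j = true → H.Adj i j) ∧
      (∀ i j, H.Adj i j → (o i j = true ↔ ¬ o j i = true))} = 2 ^ H.edgeFinset.card := by
  rw [Fintype.card_congr (orientEquiv H)]
  simp [Fintype.card_fun]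
  rw [SimpleGraph.edgeFinset, Set.toFinset_card, Fintype.card_subtype]

noncomputable def pcolorEquiv (H : SimpleGraph V) (c₀ : V → Bool)
    (hc₀ : ∀ i j, H.Adj i j → c₀ i ≠ c₀ j) :
    {c : V → Bool // ∀ i j, H.Adj i j → c i ≠ c j} ≃ (H.ConnectedComponent → Bool) where
  toFun c := SimpleGraph.ConnectedComponent.lift (fun v => xor (c.1 v) (c₀ v)) (by
    intro v w p hp
    induction p with
    | nil => rfl
    | @cons u x y h p ih =>
      refine Eq.trans ?_ (ih (by simpa using hp.of_cons))
      have h1 : c.1 u = !c.1 x := by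
        have := c.2 u x h; cases hcx : c.1 x <;> cases hcu : c.1 u <;> simp_all
      have h2 : c₀ u = !c₀ x := by
        have := hc₀ u x h; cases hcx : c₀ x <;> cases hcu : c₀ u <;> simp_all
      show xor (c.1 u) (c₀ u) = xor (c.1 x) (c₀ x)
      rw [h1, h2]; cases c.1 x <;> cases c₀ x <;> rfl)
  invFun f := ⟨fun v => xor (f (H.connectedComponentMk v)) (c₀ v), by
    intro i j hij
    simp only []
    rw [SimpleGraph.ConnectedComponent.connectedComponentMk_eq_of_adj hij]
    have := hc₀ i j hij
    cases h0 : c₀ i <;> cases h1 : c₀ j <;>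
      cases f (H.connectedComponentMk j) <;> simp_all⟩
  left_inv c := by
    ext v
    simp only [SimpleGraph.ConnectedComponent.lift_mk]
    cases c.1 v <;> cases c₀ v <;> rfl
  right_inv f := by
    ext K
    refine SimpleGraph.ConnectedComponent.ind (fun v => ?_) K
    simp only [SimpleGraph.ConnectedComponent.lift_mk]
    cases h : f (H.connectedComponentMk v) <;> cases c₀ v <;> simp [h]

lemma card_pcolor (H : SimpleGraph V) :
    (Fintype.card {c : V → Bool // ∀ i j, H.Adj i j → c i ≠ c j}) =
      if H.Colorable 2 then 2 ^ Fintype.card H.ConnectedComponent else 0 := by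
  by_cases hcol : H.Colorable 2
  · rw [if_pos hcol]
    obtain ⟨C⟩ := hcol
    have hc₀ : ∀ i j, H.Adj i j → (finTwoEquiv (C i) : Bool) ≠ finTwoEquiv (C j) := by
      intro i j hij h
      exact C.valid hij (finTwoEquiv.injective h)
    rw [Fintype.card_congr (pcolorEquiv H _ hc₀)]
    simp [Fintype.card_fun]
  · rw [if_neg hcol, Fintype.card_eq_zero_iff]
    constructor
    rintro ⟨c, hc⟩
    exact hcol (by simpa using (SimpleGraph.Coloring.mk c (fun {v w} h => hc v w h)).colorable)

def Gout (G : SimpleGraph V) (P : Finset V) : SimpleGraph V where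
  Adj i j := G.Adj i j ∧ i ∉ P ∧ j ∉ P
  symm := ⟨fun i j ⟨h, hi, hj⟩ => ⟨h.symm, hj, hi⟩⟩
  loopless := ⟨fun i ⟨h, _, _⟩ => G.loopless.irrefl i h⟩

lemma gout_edge_card (G : SimpleGraph V) (P : Finset V) :
    (Gout G P).edgeFinset.card = (G.induce (↑(univ \ P) : Set V)).edgeFinset.card := by
  classical
  rw [SimpleGraph.edgeFinset, SimpleGraph.edgeFinset, Set.toFinset_card, Set.toFinset_card]
  have hmm : ∀ e ∈ (G.induce (↑(univ \ P) : Set V)).edgeSet,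
      Sym2.map Subtype.val e ∈ (Gout G P).edgeSet := by
    intro e
    refine Sym2.ind (fun a b hab => ?_) e
    simp only [SimpleGraph.mem_edgeSet, SimpleGraph.comap_adj,
      Function.Embedding.coe_subtype] at hab
    have ha := a.2
    have hb := b.2
    simp only [Finset.coe_sdiff, Finset.coe_univ, Set.mem_diff, Set.mem_univ, true_and,
      Finset.mem_coe] at ha hb
    simpa [Gout, SimpleGraph.mem_edgeSet, Sym2.map_pair_eq] using ⟨hab, ha, hb⟩
  refine (Fintype.card_of_bijective (f := fun e => (⟨Sym2.map Subtype.val e.1, hmm e.1 e.2⟩ :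
      (Gout G P).edgeSet)) ⟨?_, ?_⟩).symm
  · intro e₁ e₂ h
    exact Subtype.ext (Sym2.map.injective Subtype.val_injective (by
      simpa using congrArg Subtype.val h))
  · rintro ⟨e, he⟩
    induction e using Sym2.ind with
    | _ a b =>
      simp only [SimpleGraph.mem_edgeSet, Gout] at he
      obtain ⟨hab, ha, hb⟩ := he
      have ha' : a ∈ (↑(univ \ P) : Set V) := by simp [ha]
      have hb' : b ∈ (↑(univ \ P) : Set V) := by simp [hb]
      refine ⟨⟨s(⟨a, ha'⟩, ⟨b, hb'⟩), ?_⟩, ?_⟩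
      · simpa [SimpleGraph.mem_edgeSet] using hab
      · apply Subtype.ext
        simp [Sym2.map_pair_eq]

noncomputable def badEquiv (G : SimpleGraph V) (hiso : ∀ v, ∃ u, G.Adj v u) (P : Finset V) :
    {o : V → V → Bool // ((∀ i j, o i j = true → G.Adj i j) ∧
        (∀ i j, G.Adj i j → (o i j = true ↔ ¬ o j i = true))) ∧
        ∀ v ∈ P, (∀ j, o v j = false) ∨ (∀ j, o j v = false)} ≃
      {c : (↑P : Set V) → Bool //
          ∀ i j, (G.induce (↑P : Set V)).Adj i j → c i ≠ c j} ×
      {o : V → V → Bool // (∀ i j, o i j = true → (Gout G P).Adj i j) ∧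
          (∀ i j, (Gout G P).Adj i j → (o i j = true ↔ ¬ o j i = true))} where
  toFun o := by
    obtain ⟨o, ⟨h1, h2⟩, hbad⟩ := o
    refine ⟨⟨fun v => decide (∃ j, o v.1 j = true), ?_⟩,
      ⟨fun i j => o i j && decide (i ∉ P) && decide (j ∉ P), ?_, ?_⟩⟩
    · rintro ⟨v, hv⟩ ⟨w, hw⟩ hadj hcc
      simp only [SimpleGraph.comap_adj, Function.Embedding.coe_subtype] at hadj
      rw [Finset.mem_coe] at hv hw
      simp only [decide_eq_decide] at hcc
      -- exactly one of o v w, o w v is true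
      have h2' := h2 v w hadj
      rcases hvw : o v w with _ | _
      · have hwv : o w v = true := by
          rcases hwv : o w v; · simp [hwv, hvw] at h2'
          rfl
        -- w has outgoing edge; v has incoming edge
        have hv' : ¬ ∃ j, o v j = true := by
          rcases hbad v hv with hb | hb
          · rintro ⟨j, hj⟩; rw [hb j] at hj; exact Bool.false_ne_true hj
          · rw [hb w] at hwv; exact absurd hwv (by simp)
        have hw' : ∃ j, o w j = true := ⟨v, hwv⟩
        rw [hcc] at hv'; exact hv' hw'
      · have hw' : ¬ ∃ j, o w j = true := by
          rcases hbad w hw with hb | hb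
          · rintro ⟨j, hj⟩; rw [hb j] at hj; exact Bool.false_ne_true hj
          · rw [hb v] at hvw; exact absurd hvw (by simp)
        have hv' : ∃ j, o v j = true := ⟨w, hvw⟩
        rw [← hcc] at hw'; exact hw' hv'
    · intro i j hij
      simp only [Bool.and_eq_true, decide_eq_true_eq] at hij
      exact ⟨h1 i j hij.1.1, hij.1.2, hij.2⟩
    · intro i j hij
      obtain ⟨hadj, hi, hj⟩ := hij
      have := h2 i j hadj
      simp [hi, hj, this]
  invFun cf := by
    obtain ⟨⟨c, hc⟩, ⟨f, hf1, hf2⟩⟩ := cf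
    refine ⟨fun i j => if h : G.Adj i j then
        (if hi : i ∈ P then c ⟨i, hi⟩ else if hj : j ∈ P then !c ⟨j, hj⟩ else f i j)
        else false, ⟨?_, ?_⟩, ?_⟩
    · intro i j hij
      by_contra h
      simp [h] at hij
    · intro i j hadj
      beta_reduce
      rw [dif_pos hadj, dif_pos hadj.symm]
      by_cases hi : i ∈ P <;> by_cases hj : j ∈ P
      · rw [dif_pos hi, dif_pos hj]
        have : c ⟨i, hi⟩ ≠ c ⟨j, hj⟩ := hc _ _ (by
          simp only [SimpleGraph.comap_adj, Function.Embedding.coe_subtype]; exact hadj)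
        cases h1 : c ⟨i, hi⟩ <;> cases h2 : c ⟨j, hj⟩ <;> simp_all
      · rw [dif_pos hi, dif_neg hj, dif_pos hi]
        cases c ⟨i, hi⟩ <;> simp
      · rw [dif_neg hi, dif_pos hj, dif_pos hj]
        cases c ⟨j, hj⟩ <;> simp
      · rw [dif_neg hi, dif_neg hj, dif_neg hj, dif_neg hi]
        exact hf2 i j ⟨hadj, hi, hj⟩
    · intro v hv
      rcases hcv : c ⟨v, hv⟩ with _ | _
      · left
        intro j
        beta_reduce
        by_cases h : G.Adj v j
        · rw [dif_pos h, dif_pos hv, hcv]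
        · rw [dif_neg h]
      · right
        intro j
        beta_reduce
        by_cases h : G.Adj j v
        · rw [dif_pos h]
          by_cases hj : j ∈ P
          · rw [dif_pos hj]
            have : c ⟨j, hj⟩ ≠ c ⟨v, hv⟩ := hc _ _ (by
              simp only [SimpleGraph.comap_adj, Function.Embedding.coe_subtype]; exact h)
            rw [hcv] at this
            cases hcj : c ⟨j, hj⟩
            · rfl
            · exact absurd rfl (hcj ▸ this)
          · rw [dif_neg hj, dif_pos hv, hcv]
            rfl
        · rw [dif_neg h]
  left_inv := by
    rintro ⟨o, ⟨h1, h2⟩, hbad⟩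
    apply Subtype.ext
    funext i j
    simp only []
    by_cases h : G.Adj i j
    · rw [dif_pos h]
      by_cases hi : i ∈ P
      · rw [dif_pos hi]
        -- need: decide (∃ k, o i k) = o i j
        have h2' := h2 i j h
        rcases hij : o i j with _ | _
        · -- o i j false so o j i true, so i has incoming, so Bad i means no outgoing
          have hji : o j i = true := by
            rcases hji : o j i; · simp [hji, hij] at h2'
            rfl
          simp only [decide_eq_false_iff_not]
          rintro ⟨k, hk⟩
          rcases hbad i hi with hb | hb
          · rw [hb k] at hk; exact Bool.false_ne_true hk
          · rw [hb j] at hji; exact Bool.false_ne_true hji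
        · simp only [decide_eq_true_eq]
          exact ⟨j, hij⟩
      · rw [dif_neg hi]
        by_cases hj : j ∈ P
        · rw [dif_pos hj]
          have h2' := h2 i j h
          rcases hij : o i j with _ | _
          · have hji : o j i = true := by
              rcases hji : o j i; · simp [hji, hij] at h2'
              rfl
            simp only [Bool.not_eq_false', decide_eq_true_eq]
            exact ⟨i, hji⟩
          · simp only [Bool.not_eq_true', decide_eq_false_iff_not]
            rintro ⟨k, hk⟩
            rcases hbad j hj with hb | hb
            · rw [hb k] at hk; exact Bool.false_ne_true hk
            · have : o i j = false := hb i
              rw [this] at hij; exact Bool.false_ne_true hij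
        · rw [dif_neg hj]
          simp [hi, hj]
    · rw [dif_neg h]
      rcases hij : o i j with _ | _
      · rfl
      · exact absurd (h1 i j hij) h
  right_inv := by
    rintro ⟨⟨c, hc⟩, ⟨f, hf1, hf2⟩⟩
    simp only [Prod.mk.injEq]
    constructor
    · apply Subtype.ext
      funext ⟨v, hv⟩
      rw [Finset.mem_coe] at hv
      simp only []
      rcases hcv : c ⟨v, hv⟩ with _ | _
      · simp only [decide_eq_false_iff_not]
        rintro ⟨j, hj⟩
        by_cases h : G.Adj v j
        · rw [dif_pos h, dif_pos hv, hcv] at hj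
          exact Bool.false_ne_true hj
        · rw [dif_neg h] at hj
          exact Bool.false_ne_true hj
      · simp only [decide_eq_true_eq]
        obtain ⟨u, hu⟩ := hiso v
        refine ⟨u, ?_⟩
        rw [dif_pos hu, dif_pos hv, hcv]
    · apply Subtype.ext
      funext i j
      simp only []
      by_cases hi : i ∈ P
      · have : f i j = false := by
          rcases hfij : f i j
          · rfl
          · exact absurd (hf1 i j hfij).2.1 (by simpa using hi)
        simp [hi, this]
      · by_cases hj : j ∈ P
        · have : f i j = false := by
            rcases hfij : f i j
            · rfl
            · exact absurd (hf1 i j hfij).2.2 (by simpa using hj)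
          simp [hj, this]
        · by_cases h : G.Adj i j
          · rw [dif_pos h, dif_neg hi, dif_neg hj]
            simp [hi, hj]
          · rw [dif_neg h]
            have : f i j = false := by
              rcases hfij : f i j
              · rfl
              · exact absurd (hf1 i j hfij).1 h
            simp [this]

lemma card_bad (G : SimpleGraph V) (hiso : ∀ v, ∃ u, G.Adj v u) (P : Finset V) :
    Fintype.card {o : V → V → Bool // ((∀ i j, o i j = true → G.Adj i j) ∧
        (∀ i j, G.Adj i j → (o i j = true ↔ ¬ o j i = true))) ∧
        ∀ v ∈ P, (∀ j, o v j = false) ∨ (∀ j, o j v = false)} =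
      (if (G.induce (↑P : Set V)).Colorable 2 then
        2 ^ Fintype.card (G.induce (↑P : Set V)).ConnectedComponent else 0) *
      2 ^ (G.induce (↑(univ \ P) : Set V)).edgeFinset.card := by
  rw [Fintype.card_congr (badEquiv G hiso P), Fintype.card_prod,
    card_orient, gout_edge_card]
  congr 1
  convert card_pcolor (G.induce (↑P : Set V))

/-- The number of orientations without sources and sinks of a finite loopless graph `G`
without isolated vertices equals
`∑_{m=0}^{n} (-1)^m ∑_{P : |P| = m, ⟨P⟩ bipartite} 2^{μ(P) + k(P)}`,
where `μ(P)` is the number of edges with both endpoints outside `P` and `k(P)` the number of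
connected components of the induced subgraph `⟨P⟩`. An orientation is encoded as a Boolean
relation `o` choosing exactly one direction for each edge of `G`. -/
theorem stmt_6 (n : ℕ) (G : SimpleGraph (Fin n)) (hiso : ∀ v, ∃ u, G.Adj v u) :
    (Fintype.card {o : Fin n → Fin n → Bool //
        (∀ i j, o i j = true → G.Adj i j) ∧
        (∀ i j, G.Adj i j → (o i j = true ↔ ¬ o j i = true)) ∧
        (∀ i, (∃ j, o j i = true) ∧ (∃ j, o i j = true))} : ℤ) =
      ∑ m ∈ Finset.range (n + 1), (-1 : ℤ) ^ m *
        ∑ P ∈ (univ : Finset (Finset (Fin n))).filter (fun (P : Finset (Fin n)) =>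
            P.card = m ∧ (G.induce (↑P : Set (Fin n))).Colorable 2),
          2 ^ ((G.induce (↑(univ \ P) : Set (Fin n))).edgeFinset.card +
              Fintype.card (G.induce (↑P : Set (Fin n))).ConnectedComponent) := by
  classical
  set base : (Fin n → Fin n → Bool) → Prop := fun o =>
    (∀ i j, o i j = true → G.Adj i j) ∧
    (∀ i j, G.Adj i j → (o i j = true ↔ ¬ o j i = true)) with hbase
  set Bad : (Fin n → Fin n → Bool) → Fin n → Prop := fun o v =>
    (∀ j, o v j = false) ∨ (∀ j, o j v = false) with hBad
  -- Step 0: express the cardinality as a sum of indicators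
  have h0 : Fintype.card {o : Fin n → Fin n → Bool //
        (∀ i j, o i j = true → G.Adj i j) ∧
        (∀ i j, G.Adj i j → (o i j = true ↔ ¬ o j i = true)) ∧
        (∀ i, (∃ j, o j i = true) ∧ (∃ j, o i j = true))} =
      ∑ o ∈ (univ : Finset (Fin n → Fin n → Bool)).filter base,
        if (∀ v, ¬ Bad o v) then 1 else 0 := by
    rw [Fintype.card_subtype, ← Finset.card_filter, Finset.filter_filter]
    congr 1
    apply Finset.filter_congr
    intro o _
    simp only [hbase, hBad]
    constructor
    · rintro ⟨hA, hB, hC⟩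
      refine ⟨⟨hA, hB⟩, fun v hv => ?_⟩
      rcases hv with hv | hv
      · obtain ⟨j, hj⟩ := (hC v).2
        rw [hv j] at hj; exact Bool.false_ne_true hj
      · obtain ⟨j, hj⟩ := (hC v).1
        rw [hv j] at hj; exact Bool.false_ne_true hj
    · rintro ⟨⟨hA, hB⟩, hC⟩
      refine ⟨hA, hB, fun v => ?_⟩
      have := hC v
      push_neg at this
      obtain ⟨⟨j₁, hj₁⟩, ⟨j₂, hj₂⟩⟩ := this
      exact ⟨⟨j₂, by simpa using hj₂⟩, ⟨j₁, by simpa using hj₁⟩⟩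
  -- Step 1: inclusion-exclusion pointwise
  have h1 : ∀ o : Fin n → Fin n → Bool,
      (if (∀ v, ¬ Bad o v) then (1 : ℤ) else 0) =
        ∑ P ∈ (univ : Finset (Fin n)).powerset,
          (-1 : ℤ) ^ P.card * (if ∀ v ∈ P, Bad o v then 1 else 0) := by
    intro o
    set B : Finset (Fin n) := univ.filter (Bad o) with hB
    have hsub : ∀ P : Finset (Fin n), (∀ v ∈ P, Bad o v) ↔ P ⊆ B := by
      intro P
      constructor
      · intro h x hx; rw [hB, Finset.mem_filter]; exact ⟨Finset.mem_univ x, h x hx⟩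
      · intro h x hx; have := h hx; rw [hB, Finset.mem_filter] at this; exact this.2
    calc (if (∀ v, ¬ Bad o v) then (1 : ℤ) else 0)
        = (if B = ∅ then 1 else 0) := by
          congr 1
          simp only [hB, eq_iff_iff]
          rw [Finset.filter_eq_empty_iff]
          simp
      _ = ∑ P ∈ B.powerset, (-1 : ℤ) ^ P.card := (Finset.sum_powerset_neg_one_pow_card).symm
      _ = ∑ P ∈ (univ : Finset (Fin n)).powerset,
            (-1 : ℤ) ^ P.card * (if ∀ v ∈ P, Bad o v then 1 else 0) := by
          have hfil : ((univ : Finset (Fin n)).powerset.filter (fun P => P ⊆ B)) =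
              B.powerset := by
            ext P
            simp
          rw [← hfil, Finset.sum_filter]
          apply Finset.sum_congr rfl
          intro P _
          simp only [hsub]
          split_ifs <;> ring
  -- Step 2: the count of orientations bad on all of P
  have h2 : ∀ P : Finset (Fin n),
      ∑ o ∈ (univ : Finset (Fin n → Fin n → Bool)).filter base,
          (if ∀ v ∈ P, Bad o v then (1 : ℤ) else 0) =
        (((if (G.induce (↑P : Set (Fin n))).Colorable 2 then
            2 ^ Fintype.card (G.induce (↑P : Set (Fin n))).ConnectedComponent else 0) *
          2 ^ (G.induce (↑(univ \ P) : Set (Fin n))).edgeFinset.card : ℕ) : ℤ) := by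
    intro P
    rw [← card_bad G hiso P]
    rw [Fintype.card_subtype, Finset.card_filter]
    push_cast
    rw [Finset.sum_filter]
    apply Finset.sum_congr rfl
    intro o _
    by_cases hb : base o
    · rw [if_pos hb]
      by_cases hd : ∀ v ∈ P, Bad o v
      · rw [if_pos hd, if_pos (⟨hb, hd⟩ : _ ∧ _)]
      · rw [if_neg hd, if_neg (fun h => hd (And.right h))]
    · rw [if_neg hb, if_neg (fun h => hb (And.left h))]
  -- Assemble
  rw [h0]
  push_cast
  rw [Finset.sum_congr rfl (fun o _ => h1 o), Finset.sum_comm]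
  rw [Finset.sum_congr rfl (fun P _ => by
    rw [← Finset.mul_sum, h2 P] :
    ∀ _, _)]
  rw [Finset.powerset_univ]
  rw [← Finset.sum_fiberwise_of_maps_to (g := Finset.card)
    (t := Finset.range (n + 1)) (fun P _ => by
      rw [Finset.mem_range, Nat.lt_succ_iff]
      simpa using Finset.card_le_univ P)]
  apply Finset.sum_congr rfl
  intro m hm
  rw [Finset.mul_sum]
  rw [Finset.sum_congr rfl (fun P hP => by
    rw [(Finset.mem_filter.mp hP).2] :
    ∀ _, _)]
  rw [Finset.sum_filter, Finset.sum_filter]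
  apply Finset.sum_congr rfl
  intro P _
  by_cases h1 : P.card = m
  · by_cases h2 : (G.induce (↑P : Set (Fin n))).Colorable 2
    · rw [if_pos h1, if_pos (⟨h1, h2⟩ :
        P.card = m ∧ (G.induce (↑P : Set (Fin n))).Colorable 2), if_pos h2]
      push_cast
      rw [pow_add]
      ring
    · rw [if_pos h1, if_neg (fun hc => h2 (And.right hc)), if_neg h2]
      simp
  · rw [if_neg h1, if_neg (fun hc => h1 (And.left hc))]
end

section
/- Let G be a connected finite simple graph with edge weights. Then the external activity polynomial C_G(w) equals the statistical sum ∑_{H} w(H) over all connected spanning subgraphs H of G (subgraphs containing all vertices and connected). -/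
open Finset
open scoped Classical

namespace Stmt11Aux
open SimpleGraph

variable {V : Type*}

lemma reach_of_walk {G T : SimpleGraph V} : ∀ {u v : V} (p : G.Walk u v),
    (∀ x y, G.Adj x y → s(x, y) ∈ p.edges → T.Reachable x y) → T.Reachable u v := by
  intro u v p
  induction p with
  | nil => exact fun _ => Reachable.refl _
  | cons ha p ih =>
    intro h
    exact (h _ _ ha (by simp)).trans (ih fun x y hxy hm => h x y hxy (by simp [hm]))

lemma reach_of_sup_edge {T : SimpleGraph V} {a b : V} (hab : T.Reachable a b)
    {u v : V} (h : (T ⊔ SimpleGraph.fromEdgeSet {s(a, b)}).Reachable u v) : T.Reachable u v := by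
  obtain ⟨p⟩ := h
  refine reach_of_walk p ?_
  intro x y hxy _
  rw [sup_adj] at hxy
  rcases hxy with hxy | hxy
  · exact hxy.reachable
  · rw [fromEdgeSet_adj, Set.mem_singleton_iff, Sym2.eq_iff] at hxy
    rcases hxy.1 with ⟨rfl, rfl⟩ | ⟨rfl, rfl⟩
    · exact hab
    · exact hab.symm

/-- The subgraph of `H` consisting of edges with `ν`-value at least `k`. -/
def geSub (H : SimpleGraph V) (ν : Sym2 V → ℕ) (k : ℕ) : SimpleGraph V :=
  SimpleGraph.fromEdgeSet {f | f ∈ H.edgeSet ∧ k ≤ ν f}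

lemma geSub_edgeSet (H : SimpleGraph V) (ν : Sym2 V → ℕ) (k : ℕ) :
    (geSub H ν k).edgeSet = {f | f ∈ H.edgeSet ∧ k ≤ ν f} := by
  rw [geSub, edgeSet_fromEdgeSet]
  ext f
  simp only [Set.mem_diff, Set.mem_setOf_eq, and_iff_left_iff_imp]
  exact fun hf => H.not_isDiag_of_mem_edgeSet hf.1

/-- The (greedy maximal) spanning tree of `H`: the edges that are bridges among
the edges of larger-or-equal `ν`-value. -/
def maxTree (H : SimpleGraph V) (ν : Sym2 V → ℕ) : SimpleGraph V :=
  SimpleGraph.fromEdgeSet {e | e ∈ H.edgeSet ∧ (geSub H ν (ν e)).IsBridge e}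

lemma maxTree_edgeSet (H : SimpleGraph V) (ν : Sym2 V → ℕ) :
    (maxTree H ν).edgeSet = {e | e ∈ H.edgeSet ∧ (geSub H ν (ν e)).IsBridge e} := by
  rw [maxTree, edgeSet_fromEdgeSet]
  ext f
  simp only [Set.mem_diff, Set.mem_setOf_eq, and_iff_left_iff_imp]
  exact fun hf => H.not_isDiag_of_mem_edgeSet hf.1

lemma maxTree_le (H : SimpleGraph V) (ν : Sym2 V → ℕ) : maxTree H ν ≤ H := by
  rw [← edgeSet_subset_edgeSet, maxTree_edgeSet]
  exact fun f hf => hf.1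

lemma reach_ge [Finite V] {H : SimpleGraph V} {ν : Sym2 V → ℕ} (hν : Function.Injective ν) :
    ∀ (k : ℕ) {u v : V}, H.Adj u v →
      {f | f ∈ H.edgeSet ∧ ν s(u, v) < ν f}.ncard < k →
      (SimpleGraph.fromEdgeSet
        {g | g ∈ (maxTree H ν).edgeSet ∧ ν s(u, v) ≤ ν g}).Reachable u v := by
  intro k
  induction k with
  | zero => exact fun h hk => absurd hk (Nat.not_lt_zero _)
  | succ k ih =>
    intro u v huv hk
    by_cases hm : s(u, v) ∈ (maxTree H ν).edgeSet
    · exact Adj.reachable (by rw [fromEdgeSet_adj]; exact ⟨⟨hm, le_rfl⟩, huv.ne⟩)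
    · have heH : s(u, v) ∈ H.edgeSet := huv
      rw [maxTree_edgeSet, Set.mem_setOf_eq] at hm
      have hnb : ¬ (geSub H ν (ν s(u, v))).IsBridge s(u, v) := fun hb => hm ⟨heH, hb⟩
      rw [isBridge_iff] at hnb
      have hadj : (geSub H ν (ν s(u, v))).Adj u v := by
        rw [geSub, fromEdgeSet_adj]
        exact ⟨⟨heH, le_rfl⟩, huv.ne⟩
      have hreach : ((geSub H ν (ν s(u, v))) \
          SimpleGraph.fromEdgeSet {s(u, v)}).Reachable u v := by
        by_contra hre
        exact hnb hre
      obtain ⟨p⟩ := hreach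
      refine reach_of_walk p ?_
      intro x y hxy _
      rw [sdiff_adj] at hxy
      obtain ⟨hxy1, hxy2⟩ := hxy
      rw [geSub, fromEdgeSet_adj] at hxy1
      obtain ⟨⟨hxyH, hxyge⟩, hne⟩ := hxy1
      have hnee : s(x, y) ≠ s(u, v) := by
        intro h
        exact hxy2 (by rw [fromEdgeSet_adj]; exact ⟨by simp [h], hne⟩)
      have hlt : ν s(u, v) < ν s(x, y) := lt_of_le_of_ne hxyge (fun h => hnee (hν h.symm))
      have hmeas : {f | f ∈ H.edgeSet ∧ ν s(x, y) < ν f}.ncard <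
          {f | f ∈ H.edgeSet ∧ ν s(u, v) < ν f}.ncard := by
        apply Set.ncard_lt_ncard
        · constructor
          · exact fun f hf => ⟨hf.1, lt_trans hlt hf.2⟩
          · intro hsub
            exact absurd (hsub ⟨hxyH, hlt⟩).2 (lt_irrefl _)
        · exact Set.toFinite _
      have := ih (u := x) (v := y) ((mem_edgeSet H).mp hxyH) (by omega)
      refine this.mono (fromEdgeSet_mono ?_)
      exact fun g hg => ⟨hg.1, le_trans (le_of_lt hlt) hg.2⟩

lemma reach_maxTree_ge [Finite V] {H : SimpleGraph V} {ν : Sym2 V → ℕ}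
    (hν : Function.Injective ν) {u v : V} (huv : H.Adj u v) :
    (SimpleGraph.fromEdgeSet
      {g | g ∈ (maxTree H ν).edgeSet ∧ ν s(u, v) ≤ ν g}).Reachable u v :=
  reach_ge hν ({f | f ∈ H.edgeSet ∧ ν s(u, v) < ν f}.ncard + 1) huv (Nat.lt_succ_self _)

lemma maxTree_connected [Finite V] {H : SimpleGraph V} {ν : Sym2 V → ℕ}
    (hν : Function.Injective ν) (hH : H.Connected) : (maxTree H ν).Connected := by
  have hne : Nonempty V := hH.nonempty
  refine ⟨fun u v => ?_⟩
  obtain ⟨p⟩ := hH.preconnected u v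
  refine reach_of_walk p ?_
  intro x y hxy _
  refine (reach_maxTree_ge hν hxy).mono ?_
  conv_rhs => rw [← fromEdgeSet_edgeSet (maxTree H ν)]
  exact fromEdgeSet_mono fun g hg => hg.1

lemma maxTree_isAcyclic {H : SimpleGraph V} {ν : Sym2 V → ℕ} : (maxTree H ν).IsAcyclic := by
  intro v c hc
  have hne : c.edges.toFinset.Nonempty := by
    rw [List.toFinset_nonempty_iff]
    intro h
    have h3 := hc.three_le_length
    have := c.length_edges
    rw [h] at this
    simp at this
    omega
  obtain ⟨e, he, hmin⟩ := Finset.exists_min_image c.edges.toFinset ν hne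
  rw [List.mem_toFinset] at he
  have heT : e ∈ (maxTree H ν).edgeSet := c.edges_subset_edgeSet he
  have hbridge : (geSub H ν (ν e)).IsBridge e := by
    rw [maxTree_edgeSet, Set.mem_setOf_eq] at heT
    exact heT.2
  have hsub : ∀ f ∈ c.edges, f ∈ (geSub H ν (ν e)).edgeSet := by
    intro f hf
    have hfT := c.edges_subset_edgeSet hf
    rw [maxTree_edgeSet, Set.mem_setOf_eq] at hfT
    rw [geSub_edgeSet]
    exact ⟨hfT.1, hmin f (List.mem_toFinset.mpr hf)⟩
  have hc' := hc.transfer hsub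
  rw [isBridge_iff_forall_cycle_notMem (hsub e he)] at hbridge
  exact hbridge (c.transfer _ hsub) hc' (by rwa [Walk.edges_transfer])

lemma maxTree_isTree [Finite V] {H : SimpleGraph V} {ν : Sym2 V → ℕ}
    (hν : Function.Injective ν) (hH : H.Connected) : (maxTree H ν).IsTree :=
  ⟨maxTree_connected hν hH, maxTree_isAcyclic⟩

/-- For an externally active edge, its endpoints are joined in the tree using only
edges of larger-or-equal `ν`-value. -/
lemma reach_of_EA {T : SimpleGraph V} {ν : Sym2 V → ℕ} (hT : T.IsTree) {u v : V}
    (huv : u ≠ v) (heT : s(u, v) ∉ T.edgeSet)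
    (hEA : ∀ f ∈ (T ⊔ SimpleGraph.fromEdgeSet {s(u, v)}).edgeSet,
      ¬ (T ⊔ SimpleGraph.fromEdgeSet {s(u, v)}).IsBridge f → ν s(u, v) ≤ ν f) :
    (SimpleGraph.fromEdgeSet {h | h ∈ T.edgeSet ∧ ν s(u, v) ≤ ν h}).Reachable u v := by
  set E := T ⊔ SimpleGraph.fromEdgeSet {s(u, v)} with hE
  obtain ⟨p0⟩ := hT.isConnected.preconnected v u
  set P : T.Path v u := p0.toPath with hP
  have hPedges : ∀ f ∈ (P : T.Walk v u).edges, f ∈ T.edgeSet :=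
    fun f hf => Walk.edges_subset_edgeSet _ hf
  have hPE : ∀ f ∈ (P : T.Walk v u).edges, f ∈ E.edgeSet := by
    intro f hf
    rw [hE, edgeSet_sup]
    exact Or.inl (hPedges f hf)
  have hadj : E.Adj u v := by
    rw [hE, sup_adj, fromEdgeSet_adj]
    exact Or.inr ⟨Set.mem_singleton _, huv⟩
  set Q : E.Walk v u := (P : T.Walk v u).transfer E hPE with hQ
  have hQpath : Q.IsPath := P.property.transfer hPE
  have hQedges : Q.edges = (P : T.Walk v u).edges := Walk.edges_transfer _ hPE
  have hcyc : (Walk.cons hadj Q).IsCycle := by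
    refine Path.cons_isCycle ⟨Q, hQpath⟩ hadj ?_
    rw [hQedges]
    exact fun h => heT (hPedges _ h)
  have hge : ∀ f ∈ (P : T.Walk v u).edges, ν s(u, v) ≤ ν f := by
    intro f hf
    refine hEA f (hPE f hf) ?_
    intro hb
    rw [isBridge_iff_forall_cycle_notMem (hPE f hf)] at hb
    refine hb (Walk.cons hadj Q) hcyc ?_
    rw [Walk.edges_cons, hQedges]
    exact List.mem_cons_of_mem _ hf
  have hsub : ∀ f ∈ (P : T.Walk v u).edges,
      f ∈ (SimpleGraph.fromEdgeSet {h | h ∈ T.edgeSet ∧ ν s(u, v) ≤ ν h}).edgeSet := by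
    intro f hf
    rw [edgeSet_fromEdgeSet]
    exact ⟨⟨hPedges f hf, hge f hf⟩, fun hd => T.not_isDiag_of_mem_edgeSet (hPedges f hf) hd⟩
  exact (Walk.reachable ((P : T.Walk v u).transfer _ hsub)).symm

/-- Every edge of `H` not in `maxTree H ν` is externally active for `maxTree H ν`. -/
lemma maxTree_EA [Finite V] {H : SimpleGraph V} {ν : Sym2 V → ℕ}
    (hν : Function.Injective ν) {u v : V} (he : H.Adj u v) :
    ∀ f ∈ ((maxTree H ν) ⊔ SimpleGraph.fromEdgeSet {s(u, v)}).edgeSet,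
      ¬ ((maxTree H ν) ⊔ SimpleGraph.fromEdgeSet {s(u, v)}).IsBridge f → ν s(u, v) ≤ ν f := by
  set T := maxTree H ν with hT
  set E := T ⊔ SimpleGraph.fromEdgeSet {s(u, v)} with hE
  intro f hf hnb
  by_contra hlt'
  have hlt : ν f < ν s(u, v) := lt_of_not_ge hlt'
  have hfT : f ∈ T.edgeSet := by
    rw [hE, edgeSet_sup] at hf
    rcases hf with hf | hf
    · exact hf
    · rw [edgeSet_fromEdgeSet] at hf
      exact absurd hf.1 (by rintro rfl; exact absurd rfl (ne_of_lt hlt))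
  apply hnb
  induction f using Sym2.ind with
  | _ x y =>
    have hTbridge : T.IsBridge s(x, y) :=
      (isAcyclic_iff_forall_edge_isBridge.mp (maxTree_isAcyclic (H := H) (ν := ν))) hfT
    rw [isBridge_iff] at hTbridge ⊢
    intro hre2
    have hre : (T \ SimpleGraph.fromEdgeSet {s(x, y)}).Reachable u v := by
      refine (reach_maxTree_ge hν he).mono ?_
      intro a b hab
      rw [fromEdgeSet_adj] at hab
      rw [sdiff_adj, fromEdgeSet_adj]
      refine ⟨hab.1.1, ?_⟩
      rintro ⟨habe, -⟩
      rw [habe] at hab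
      exact absurd (lt_of_lt_of_le hlt hab.1.2) (lt_irrefl _)
    have hmono : E \ SimpleGraph.fromEdgeSet {s(x, y)} ≤
        (T \ SimpleGraph.fromEdgeSet {s(x, y)}) ⊔ SimpleGraph.fromEdgeSet {s(u, v)} := by
      intro a b hab
      rw [sdiff_adj, hE, sup_adj] at hab
      rw [sup_adj, sdiff_adj]
      rcases hab.1 with h1 | h1
      · exact Or.inl ⟨h1, hab.2⟩
      · exact Or.inr h1
    exact hTbridge (reach_of_sup_edge hre (hre2.mono hmono))

/-- Condition that a set of edges is a set of externally active edges for `T`. -/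
def EASet (T : SimpleGraph V) (ν : Sym2 V → ℕ) (S : Set (Sym2 V)) : Prop :=
  ∀ e ∈ S, ¬e.IsDiag ∧ e ∉ T.edgeSet ∧
    ∀ f ∈ (T ⊔ SimpleGraph.fromEdgeSet {e}).edgeSet,
      ¬ (T ⊔ SimpleGraph.fromEdgeSet {e}).IsBridge f → ν e ≤ ν f

lemma sup_edgeSet {T : SimpleGraph V} {S : Set (Sym2 V)} {ν : Sym2 V → ℕ}
    (hS : EASet T ν S) :
    (T ⊔ SimpleGraph.fromEdgeSet S).edgeSet = T.edgeSet ∪ S := by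
  rw [edgeSet_sup, edgeSet_fromEdgeSet]
  congr 1
  ext e
  simp only [Set.mem_diff, Set.mem_setOf_eq, and_iff_left_iff_imp]
  exact fun he => (hS e he).1

lemma maxTree_sup_eq {T : SimpleGraph V} {S : Set (Sym2 V)} {ν : Sym2 V → ℕ}
    (hν : Function.Injective ν) (hT : T.IsTree) (hS : EASet T ν S) :
    maxTree (T ⊔ SimpleGraph.fromEdgeSet S) ν = T := by
  set H := T ⊔ SimpleGraph.fromEdgeSet S with hH
  have hHe : H.edgeSet = T.edgeSet ∪ S := sup_edgeSet hS
  rw [← edgeSet_inj, maxTree_edgeSet]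
  ext g
  simp only [Set.mem_setOf_eq]
  constructor
  · rintro ⟨hgH, hgB⟩
    rw [hHe] at hgH
    rcases hgH with hgT | hgS
    · exact hgT
    · exfalso
      obtain ⟨hgd, hgT, hgEA⟩ := hS g hgS
      induction g using Sym2.ind with
      | _ u v =>
        have huv : u ≠ v := by simpa using hgd
        have hre := reach_of_EA hT huv hgT hgEA
        rw [isBridge_iff] at hgB
        refine hgB (hre.mono ?_)
        intro a b hab
        rw [fromEdgeSet_adj] at hab
        rw [deleteEdges, sdiff_adj, geSub, fromEdgeSet_adj, fromEdgeSet_adj]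
        refine ⟨⟨⟨by rw [hHe]; exact Or.inl hab.1.1, hab.1.2⟩, hab.2⟩, ?_⟩
        rintro ⟨habe, -⟩
        exact hgT (habe ▸ hab.1.1)
  · intro hgT
    refine ⟨by rw [hHe]; exact Or.inl hgT, ?_⟩
    induction g using Sym2.ind with
    | _ x y =>
      have hxy : x ≠ y := fun h => T.not_isDiag_of_mem_edgeSet hgT (by simp [h])
      have hTb : ¬ (T \ SimpleGraph.fromEdgeSet {s(x, y)}).Reachable x y := by
        have := (isAcyclic_iff_forall_edge_isBridge.mp hT.IsAcyclic) hgT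
        rw [isBridge_iff] at this
        exact this
      rw [isBridge_iff]
      · intro hre
        obtain ⟨p⟩ := hre
        refine hTb (reach_of_walk p ?_)
        intro a b hab hmem
        rw [deleteEdges, sdiff_adj, geSub, fromEdgeSet_adj, fromEdgeSet_adj] at hab
        obtain ⟨⟨⟨habH, habge⟩, habne⟩, habnadj⟩ := hab
        have habneg : s(a, b) ≠ s(x, y) := fun h => habnadj ⟨h, habne⟩
        have hablt : ν s(x, y) < ν s(a, b) :=
          lt_of_le_of_ne habge (fun h => habneg (hν h.symm))
        rw [hHe] at habH
        rcases habH with habT | habS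
        · exact Adj.reachable (by
            rw [sdiff_adj, fromEdgeSet_adj]
            exact ⟨habT, fun h => habneg h.1⟩)
        · obtain ⟨habd, habnT, habEA⟩ := hS _ habS
          have hre2 := reach_of_EA hT habne habnT habEA
          refine hre2.mono ?_
          intro c d hcd
          rw [fromEdgeSet_adj] at hcd
          rw [sdiff_adj, fromEdgeSet_adj]
          refine ⟨hcd.1.1, ?_⟩
          rintro ⟨hcde, -⟩
          rw [hcde] at hcd
          exact absurd (lt_of_lt_of_le hablt hcd.1.2) (lt_irrefl _)

lemma sup_sdiff_edgeSet {T H : SimpleGraph V} (hTH : T ≤ H) :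
    T ⊔ SimpleGraph.fromEdgeSet (H.edgeSet \ T.edgeSet) = H := by
  ext a b
  rw [sup_adj, fromEdgeSet_adj, Set.mem_diff]
  constructor
  · rintro (h | ⟨⟨h1, -⟩, -⟩)
    · exact hTH h
    · exact h1
  · intro h
    by_cases hT : T.Adj a b
    · exact Or.inl hT
    · exact Or.inr ⟨⟨h, hT⟩, h.ne⟩

end Stmt11Aux

open Stmt11Aux SimpleGraph

set_option maxHeartbeats 1000000 in
/-- The external activity polynomial of a connected finite simple graph equals the
statistical sum over all connected spanning subgraphs. Here the linear order on edges is
given by an injective numbering `ν`, and an edge `e ∉ T` is externally active for a spanning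
tree `T` when it is minimal (w.r.t. `ν`) among the edges of the unique cycle of `T ∪ {e}`
(the non-bridge edges of `T ∪ {e}`). -/
theorem stmt_11 (n : ℕ) {R : Type*} [CommRing R] (G : SimpleGraph (Fin n))
    (hG : G.Connected) (w : Fin n → Fin n → R) (hsym : ∀ i j, w i j = w j i)
    (ν : Sym2 (Fin n) → ℕ) (hν : Function.Injective ν) :
    (∑ T : SimpleGraph (Fin n),
      if T ≤ G ∧ T.IsTree then
        (∏ e ∈ T.edgeFinset, Sym2.lift ⟨w, hsym⟩ e) *
          ∏ e ∈ (G.edgeFinset \ T.edgeFinset).filter (fun e =>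
              ∀ f ∈ (T ⊔ SimpleGraph.fromEdgeSet {e}).edgeFinset,
                ¬ (T ⊔ SimpleGraph.fromEdgeSet {e}).IsBridge f → ν e ≤ ν f),
            (Sym2.lift ⟨w, hsym⟩ e + 1)
      else 0) =
    ∑ H : SimpleGraph (Fin n),
      if H ≤ G ∧ H.Connected then ∏ e ∈ H.edgeFinset, Sym2.lift ⟨w, hsym⟩ e else 0 := by
  set W : Sym2 (Fin n) → R := Sym2.lift ⟨w, hsym⟩ with hW
  set EAfin : SimpleGraph (Fin n) → Finset (Sym2 (Fin n)) := fun T =>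
    (G.edgeFinset \ T.edgeFinset).filter (fun e =>
      ∀ f ∈ (T ⊔ SimpleGraph.fromEdgeSet {e}).edgeFinset,
        ¬ (T ⊔ SimpleGraph.fromEdgeSet {e}).IsBridge f → ν e ≤ ν f) with hEAfin
  rw [← Finset.sum_filter, ← Finset.sum_filter]
  -- basic translation: membership in `EAfin T` gives the `EASet` condition
  have hEAS : ∀ T : SimpleGraph (Fin n), ∀ S : Finset (Sym2 (Fin n)),
      S ⊆ EAfin T → EASet T ν ↑S := by
    intro T S hSsub e he
    have heEA := hSsub (Finset.mem_coe.mp he)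
    rw [hEAfin, Finset.mem_filter, Finset.mem_sdiff] at heEA
    obtain ⟨⟨heG, heT⟩, hcond⟩ := heEA
    refine ⟨G.not_isDiag_of_mem_edgeSet (mem_edgeFinset.mp heG),
      fun h => heT (mem_edgeFinset.mpr h), ?_⟩
    intro f hf hnb
    exact hcond f (mem_edgeFinset.mpr hf) hnb
  calc
    ∑ T ∈ Finset.univ.filter (fun T => T ≤ G ∧ T.IsTree),
        (∏ e ∈ T.edgeFinset, W e) * ∏ e ∈ EAfin T, (W e + 1)
      = ∑ T ∈ Finset.univ.filter (fun T => T ≤ G ∧ T.IsTree),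
          ∑ S ∈ (EAfin T).powerset, (∏ e ∈ T.edgeFinset, W e) * ∏ e ∈ S, W e := by
        refine Finset.sum_congr rfl fun T _ => ?_
        rw [Finset.prod_add W (fun _ => (1 : R)) (EAfin T)]
        simp only [Finset.prod_const_one, mul_one]
        rw [Finset.mul_sum]
    _ = ∑ p ∈ (Finset.univ.filter (fun T => T ≤ G ∧ T.IsTree)).sigma
          (fun T => (EAfin T).powerset),
          (∏ e ∈ p.1.edgeFinset, W e) * ∏ e ∈ p.2, W e := by
        rw [Finset.sum_sigma]
    _ = ∑ H ∈ Finset.univ.filter (fun H => H ≤ G ∧ H.Connected),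
          ∏ e ∈ H.edgeFinset, W e := by
        refine Finset.sum_nbij'
          (fun p => p.1 ⊔ SimpleGraph.fromEdgeSet ↑p.2)
          (fun H => ⟨maxTree H ν, H.edgeFinset \ (maxTree H ν).edgeFinset⟩)
          ?_ ?_ ?_ ?_ ?_
        · -- maps into connected spanning subgraphs
          rintro ⟨T, S⟩ hp
          rw [Finset.mem_sigma, Finset.mem_filter, Finset.mem_powerset] at hp
          obtain ⟨⟨-, hTG, hTtree⟩, hS⟩ := hp
          rw [Finset.mem_filter]
          refine ⟨Finset.mem_univ _, ?_, ?_⟩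
          · refine sup_le hTG ?_
            intro a b hab
            rw [fromEdgeSet_adj] at hab
            have := hEAS T S hS _ hab.1
            have h2 := hS (Finset.mem_coe.mp hab.1)
            rw [hEAfin, Finset.mem_filter, Finset.mem_sdiff] at h2
            exact (mem_edgeFinset.mp h2.1.1 : G.Adj a b)
          · exact hTtree.isConnected.mono le_sup_left
        · -- inverse maps into pairs
          intro H hH
          rw [Finset.mem_filter] at hH
          obtain ⟨-, hHG, hHconn⟩ := hH
          rw [Finset.mem_sigma, Finset.mem_filter, Finset.mem_powerset]
          refine ⟨⟨Finset.mem_univ _, le_trans (maxTree_le H ν) hHG,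
            maxTree_isTree hν hHconn⟩, ?_⟩
          intro e he
          rw [Finset.mem_sdiff] at he
          obtain ⟨heH, heT⟩ := he
          rw [hEAfin, Finset.mem_filter, Finset.mem_sdiff]
          refine ⟨⟨?_, ?_⟩, ?_⟩
          · rw [mem_edgeFinset] at heH ⊢
            exact edgeSet_mono hHG heH
          · exact heT
          · induction e using Sym2.ind with
          | _ u v =>
            intro f hf hnb
            exact maxTree_EA hν (mem_edgeFinset.mp heH) f (mem_edgeFinset.mp hf) hnb
        · -- left inverse
          rintro ⟨T, S⟩ hp
          rw [Finset.mem_sigma, Finset.mem_filter, Finset.mem_powerset] at hp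
          obtain ⟨⟨-, hTG, hTtree⟩, hS⟩ := hp
          have h1 : maxTree (T ⊔ SimpleGraph.fromEdgeSet ↑S) ν = T :=
            maxTree_sup_eq hν hTtree (hEAS T S hS)
          have hdisj : Disjoint T.edgeFinset S := by
            rw [Finset.disjoint_right]
            intro e he
            have h2 := hS he
            rw [hEAfin, Finset.mem_filter, Finset.mem_sdiff] at h2
            exact h2.1.2
          have h2 : (T ⊔ SimpleGraph.fromEdgeSet ↑S).edgeFinset \ T.edgeFinset = S := by
            have h3 : (T ⊔ SimpleGraph.fromEdgeSet ↑S).edgeFinset = T.edgeFinset ∪ S := by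
              ext e
              rw [mem_edgeFinset, sup_edgeSet (hEAS T S hS), Set.mem_union, Finset.mem_union,
                mem_edgeFinset, Finset.mem_coe]
            rw [h3, Finset.union_sdiff_cancel_left hdisj]
          have h5 : (maxTree (T ⊔ SimpleGraph.fromEdgeSet ↑S) ν).edgeSet = T.edgeSet :=
            congrArg SimpleGraph.edgeSet h1
          dsimp only
          simp only [h1]
          congr 1
          try rw [heq_eq_eq]
          ext e
          simp only [Finset.mem_sdiff, SimpleGraph.mem_edgeFinset, h5,
            sup_edgeSet (hEAS T S hS), Set.mem_union, Finset.mem_coe]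
          constructor
          · rintro ⟨h | h, hT⟩
            · exact absurd h hT
            · exact h
          · intro h
            exact ⟨Or.inr h, (hEAS T S hS e (Finset.mem_coe.mpr h)).2.1⟩
        · -- right inverse
          intro H hH
          rw [Finset.mem_filter] at hH
          dsimp only
          have hcoe : (↑(H.edgeFinset \ (maxTree H ν).edgeFinset) : Set (Sym2 (Fin n))) =
              H.edgeSet \ (maxTree H ν).edgeSet := by
            rw [Finset.coe_sdiff, coe_edgeFinset, coe_edgeFinset]
          rw [hcoe]
          exact sup_sdiff_edgeSet (maxTree_le H ν)
        · -- values agree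
          rintro ⟨T, S⟩ hp
          rw [Finset.mem_sigma, Finset.mem_filter, Finset.mem_powerset] at hp
          obtain ⟨⟨-, hTG, hTtree⟩, hS⟩ := hp
          have hdisj : Disjoint T.edgeFinset S := by
            rw [Finset.disjoint_right]
            intro e he
            have h2 := hS he
            rw [hEAfin, Finset.mem_filter, Finset.mem_sdiff] at h2
            exact h2.1.2
          dsimp only
          rw [← Finset.prod_union hdisj]
          refine Finset.prod_congr ?_ fun _ _ => rfl
          ext e
          simp only [Finset.mem_union, SimpleGraph.mem_edgeFinset,
            sup_edgeSet (hEAS T S hS), Set.mem_union, Finset.mem_coe]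
end

section
/- Let S be a subset of the positive roots of D_n, i.e. vectors b_i − b_j ('plus' roots) and b_i + b_j ('minus' roots) for 1 ≤ i < j ≤ n. Then S is linearly independent if and only if every connected component of the signed graph Γ(S) is either a tree or contains exactly one cycle, and that cycle contains an odd number of 'minus' edges. -/
open Finset
open scoped Classical

namespace Stmt13Aux

variable {n : ℕ} (Sp Sm : Finset (Fin n × Fin n))

/-- plain adjacency relation -/
def Rrel : Fin n → Fin n → Prop := fun a b =>
  (a, b) ∈ Sp ∨ (b, a) ∈ Sp ∨ (a, b) ∈ Sm ∨ (b, a) ∈ Sm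

/-- parity-tracking step relation -/
def Prel : Fin n × Bool → Fin n × Bool → Prop := fun x y =>
  (((x.1, y.1) ∈ Sp ∨ (y.1, x.1) ∈ Sp) ∧ y.2 = x.2) ∨
  (((x.1, y.1) ∈ Sm ∨ (y.1, x.1) ∈ Sm) ∧ y.2 = !x.2)

/-- sign as a real number: `false ↦ -1`, `true ↦ 1` -/
def pm : Bool → ℝ := fun p => cond p 1 (-1)

@[simp] lemma pm_false : pm false = -1 := rfl
@[simp] lemma pm_true : pm true = 1 := rfl
lemma pm_not (p : Bool) : pm (!p) = -pm p := by cases p <;> simp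
lemma pm_cases (p : Bool) : pm p = 1 ∨ pm p = -1 := by cases p <;> simp
lemma pm_ne_zero (p : Bool) : pm p ≠ 0 := by cases p <;> norm_num
lemma pm_mul_self (p : Bool) : pm p * pm p = 1 := by cases p <;> norm_num

/-- standard basis vector -/
def bv (u : Fin n) : Fin n → ℝ := Pi.single u 1

/-- index type of all edges -/
abbrev EI := (↥Sp ⊕ ↥Sm)

def ea : EI Sp Sm → Fin n := Sum.elim (fun p => (p : Fin n × Fin n).1) (fun p => (p : Fin n × Fin n).1)
def eb : EI Sp Sm → Fin n := Sum.elim (fun p => (p : Fin n × Fin n).2) (fun p => (p : Fin n × Fin n).2)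
def es : EI Sp Sm → ℝ := Sum.elim (fun _ => -1) (fun _ => 1)

/-- edge vectors -/
def W : EI Sp Sm → (Fin n → ℝ) := fun e =>
  bv (ea Sp Sm e) + es Sp Sm e • bv (eb Sp Sm e)

lemma W_eq :
    (Sum.elim
      (fun p : ↥Sp => (Pi.single (p : Fin n × Fin n).1 (1 : ℝ) -
        Pi.single (p : Fin n × Fin n).2 (1 : ℝ) : Fin n → ℝ))
      (fun p : ↥Sm => (Pi.single (p : Fin n × Fin n).1 (1 : ℝ) +
        Pi.single (p : Fin n × Fin n).2 (1 : ℝ) : Fin n → ℝ))) = W Sp Sm := by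
  funext e
  cases e with
  | inl p => simp [W, bv, ea, eb, es, sub_eq_add_neg, neg_one_smul]
  | inr p => simp [W, bv, ea, eb, es]

/-- the connected component of `v` -/
noncomputable def Cset (v : Fin n) : Finset (Fin n) :=
  univ.filter (fun u => Relation.ReflTransGen (Rrel Sp Sm) v u)

lemma mem_Cset {v u : Fin n} : u ∈ Cset Sp Sm v ↔ Relation.ReflTransGen (Rrel Sp Sm) v u := by
  simp [Cset]

lemma self_mem_Cset (v : Fin n) : v ∈ Cset Sp Sm v := (mem_Cset Sp Sm).2 .refl

/-- edge lies in component of `v` -/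
def inC (v : Fin n) (e : EI Sp Sm) : Prop :=
  ea Sp Sm e ∈ Cset Sp Sm v ∧ eb Sp Sm e ∈ Cset Sp Sm v

/-- span of the edge vectors in a component -/
def sp (v : Fin n) : Submodule ℝ (Fin n → ℝ) :=
  Submodule.span ℝ (W Sp Sm '' {e | inC Sp Sm v e})

lemma Rrel_symm {a b : Fin n} (h : Rrel Sp Sm a b) : Rrel Sp Sm b a := by
  unfold Rrel at *; tauto

lemma Prel_symm : Symmetric (Prel Sp Sm) := by
  rintro ⟨x, p⟩ ⟨y, q⟩ (⟨hadj, hpar⟩ | ⟨hadj, hpar⟩)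
  · exact Or.inl ⟨hadj.symm, hpar.symm⟩
  · refine Or.inr ⟨hadj.symm, ?_⟩
    simp only at hpar ⊢
    simp [hpar]

lemma Prel_shift {x y : Fin n × Bool} (h : Prel Sp Sm x y) :
    Prel Sp Sm (x.1, !x.2) (y.1, !y.2) := by
  rcases h with ⟨hadj, hpar⟩ | ⟨hadj, hpar⟩
  · exact Or.inl ⟨hadj, by simp [hpar]⟩
  · exact Or.inr ⟨hadj, by simp [hpar]⟩

lemma Prel_proj {x y : Fin n × Bool} (h : Prel Sp Sm x y) : Rrel Sp Sm x.1 y.1 := by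
  unfold Prel Rrel at *; tauto

lemma walk_proj {x y : Fin n × Bool} (h : Relation.ReflTransGen (Prel Sp Sm) x y) :
    Relation.ReflTransGen (Rrel Sp Sm) x.1 y.1 :=
  Relation.ReflTransGen.lift Prod.fst (fun _ _ hab => Prel_proj Sp Sm hab) _ _ h

lemma walk_shift {x y : Fin n × Bool} (h : Relation.ReflTransGen (Prel Sp Sm) x y) :
    Relation.ReflTransGen (Prel Sp Sm) (x.1, !x.2) (y.1, !y.2) :=
  Relation.ReflTransGen.lift (fun z : Fin n × Bool => (z.1, !z.2))
    (fun _ _ hab => Prel_shift Sp Sm hab) _ _ h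

lemma step_lift {a b : Fin n} (h : Rrel Sp Sm a b) (p : Bool) :
    ∃ q, Prel Sp Sm (a, p) (b, q) := by
  rcases h with h | h | h | h
  · exact ⟨p, Or.inl ⟨Or.inl h, rfl⟩⟩
  · exact ⟨p, Or.inl ⟨Or.inr h, rfl⟩⟩
  · exact ⟨!p, Or.inr ⟨Or.inl h, rfl⟩⟩
  · exact ⟨!p, Or.inr ⟨Or.inr h, rfl⟩⟩

lemma walk_lift {v u : Fin n} (h : Relation.ReflTransGen (Rrel Sp Sm) v u) :
    ∃ p, Relation.ReflTransGen (Prel Sp Sm) (v, false) (u, p) := by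
  induction h with
  | refl => exact ⟨false, .refl⟩
  | tail h1 h2 ih =>
      obtain ⟨p, hw⟩ := ih
      obtain ⟨q, hs⟩ := step_lift Sp Sm h2 p
      exact ⟨q, hw.tail hs⟩

lemma odd_of_both {v u : Fin n}
    (h1 : Relation.ReflTransGen (Prel Sp Sm) (v, false) (u, false))
    (h2 : Relation.ReflTransGen (Prel Sp Sm) (v, false) (u, true)) :
    Relation.TransGen (Prel Sp Sm) (v, false) (v, true) := by
  have h2' : Relation.ReflTransGen (Prel Sp Sm) (u, true) (v, false) :=
    by haveI : Std.Symm (Prel Sp Sm) := ⟨fun _ _ hh => Prel_symm Sp Sm hh⟩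
       exact Std.Symm.symm _ _ h2
  have h2'' : Relation.ReflTransGen (Prel Sp Sm) (u, false) (v, true) := by
    simpa using walk_shift Sp Sm h2'
  have h := h1.trans h2''
  rcases (Relation.reflTransGen_iff_eq_or_transGen).1 h with heq | ht
  · exact absurd heq (by simp)
  · exact ht


lemma Cset_eq {v u : Fin n} (h : u ∈ Cset Sp Sm v) : Cset Sp Sm u = Cset Sp Sm v := by
  have huv : Relation.ReflTransGen (Rrel Sp Sm) u v :=
    by haveI : Std.Symm (Rrel Sp Sm) := ⟨fun _ _ hab => Rrel_symm Sp Sm hab⟩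
       exact Std.Symm.symm _ _ ((mem_Cset Sp Sm).1 h)
  ext w
  simp only [mem_Cset]
  constructor
  · intro hw; exact ((mem_Cset Sp Sm).1 h).trans hw
  · intro hw; exact huv.trans hw

lemma sp_congr {v u : Fin n} (h : u ∈ Cset Sp Sm v) : sp Sp Sm u = sp Sp Sm v := by
  unfold sp inC
  rw [Cset_eq Sp Sm h]

lemma W_mem_sp {v : Fin n} {e : EI Sp Sm} (he : inC Sp Sm v e) : W Sp Sm e ∈ sp Sp Sm v :=
  Submodule.subset_span ⟨e, he, rfl⟩

/-- key span lemma: a parity walk from `v` to `u` puts `e_v + pm p • e_u` in the span of the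
edge vectors of the component of `v`. -/
lemma memA {v : Fin n} {x : Fin n × Bool}
    (h : Relation.ReflTransGen (Prel Sp Sm) (v, false) x) :
    bv v + pm x.2 • bv x.1 ∈ sp Sp Sm v := by
  induction h with
  | refl =>
      have : bv v + pm false • bv v = (0 : Fin n → ℝ) := by
        simp
      rw [this]; exact zero_mem _
  | @tail x y h1 h2 ih =>
      have hx1 : x.1 ∈ Cset Sp Sm v := (mem_Cset Sp Sm).2 (walk_proj Sp Sm h1)
      have hy1 : y.1 ∈ Cset Sp Sm v := (mem_Cset Sp Sm).2 (walk_proj Sp Sm (h1.tail h2))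
      rcases h2 with ⟨hadj, hpar⟩ | ⟨hadj, hpar⟩
      · -- plus edge, y.2 = x.2
        rcases hadj with hm | hm
        · set e : EI Sp Sm := Sum.inl ⟨(x.1, y.1), hm⟩ with he
          have hWe : W Sp Sm e ∈ sp Sp Sm v := W_mem_sp Sp Sm ⟨hx1, hy1⟩
          have key : bv v + pm y.2 • bv y.1 =
              bv v + pm x.2 • bv x.1 + (-(pm x.2)) • W Sp Sm e := by
            rw [hpar]
            show _ = _ + (-(pm x.2)) •
              (bv x.1 + (-1 : ℝ) • bv y.1)
            module
          rw [key]
          exact add_mem ih (Submodule.smul_mem _ _ hWe)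
        · set e : EI Sp Sm := Sum.inl ⟨(y.1, x.1), hm⟩ with he
          have hWe : W Sp Sm e ∈ sp Sp Sm v := W_mem_sp Sp Sm ⟨hy1, hx1⟩
          have key : bv v + pm y.2 • bv y.1 =
              bv v + pm x.2 • bv x.1 + (pm x.2) • W Sp Sm e := by
            rw [hpar]
            show _ = _ + (pm x.2) •
              (bv y.1 + (-1 : ℝ) • bv x.1)
            module
          rw [key]
          exact add_mem ih (Submodule.smul_mem _ _ hWe)
      · -- minus edge, y.2 = !x.2
        have hpm : pm y.2 = -pm x.2 := by rw [hpar, pm_not]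
        rcases hadj with hm | hm
        · set e : EI Sp Sm := Sum.inr ⟨(x.1, y.1), hm⟩ with he
          have hWe : W Sp Sm e ∈ sp Sp Sm v := W_mem_sp Sp Sm ⟨hx1, hy1⟩
          have key : bv v + pm y.2 • bv y.1 =
              bv v + pm x.2 • bv x.1 + (-(pm x.2)) • W Sp Sm e := by
            rw [hpm]
            show _ = _ + (-(pm x.2)) •
              (bv x.1 + (1 : ℝ) • bv y.1)
            module
          rw [key]
          exact add_mem ih (Submodule.smul_mem _ _ hWe)
        · set e : EI Sp Sm := Sum.inr ⟨(y.1, x.1), hm⟩ with he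
          have hWe : W Sp Sm e ∈ sp Sp Sm v := W_mem_sp Sp Sm ⟨hy1, hx1⟩
          have key : bv v + pm y.2 • bv y.1 =
              bv v + pm x.2 • bv x.1 + (-(pm x.2)) • W Sp Sm e := by
            rw [hpm]
            show _ = _ + (-(pm x.2)) •
              (bv y.1 + (1 : ℝ) • bv x.1)
            module
          rw [key]
          exact add_mem ih (Submodule.smul_mem _ _ hWe)

/-- parity of `u` relative to `v` -/
noncomputable def par (v u : Fin n) : Bool :=
  if Relation.ReflTransGen (Prel Sp Sm) (v, false) (u, false) then false else true

lemma par_self (v : Fin n) : par Sp Sm v v = false := if_pos .refl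

lemma par_reach {v u : Fin n} (h : u ∈ Cset Sp Sm v) :
    Relation.ReflTransGen (Prel Sp Sm) (v, false) (u, par Sp Sm v u) := by
  unfold par
  split
  · assumption
  · obtain ⟨p, hp⟩ := walk_lift Sp Sm ((mem_Cset Sp Sm).1 h)
    cases p
    · exact absurd hp (by assumption)
    · exact hp

/-- the auxiliary vectors `h_u` -/
noncomputable def hvec (v u : Fin n) : Fin n → ℝ :=
  bv v + pm (par Sp Sm v u) • bv u

lemma hvec_self (v : Fin n) : hvec Sp Sm v v = 0 := by
  simp [hvec, bv, par_self]

lemma hvec_mem {v u : Fin n} (h : u ∈ Cset Sp Sm v) : hvec Sp Sm v u ∈ sp Sp Sm v :=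
  memA Sp Sm (par_reach Sp Sm h)


/-- generic LI lemma: a family `z + c u • e_u`, `u ∈ D`, with `z` vanishing on `D`
and `c` nonzero on `D`, is linearly independent. -/
lemma li_aux {D : Finset (Fin n)} (z : Fin n → ℝ) (c : Fin n → ℝ)
    (hz : ∀ u ∈ D, z u = 0) (hc : ∀ u ∈ D, c u ≠ 0) :
    LinearIndependent ℝ (fun u : ↥D => z + c u.1 • bv u.1) := by
  rw [Fintype.linearIndependent_iff]
  intro g hg u0
  have h1 := congrFun hg u0.1
  simp only [Finset.sum_apply, Pi.add_apply, Pi.smul_apply, smul_eq_mul, bv,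
    Pi.single_apply, Pi.zero_apply, hz u0.1 u0.2] at h1
  rw [Finset.sum_eq_single u0] at h1
  · simp only [if_pos rfl, if_true, zero_add, mul_one] at h1
    rcases mul_eq_zero.1 h1 with h | h
    · exact h
    · exact absurd h (hc u0.1 u0.2)
  · intro u _ hu
    have : ¬ (u0.1 = u.1) := fun hh => hu (Subtype.ext hh.symm)
    simp [this]
  · intro h; exact absurd (Finset.mem_univ u0) h

lemma li_hvec (v : Fin n) :
    LinearIndependent ℝ (fun u : ↥((Cset Sp Sm v).erase v) => hvec Sp Sm v u.1) := by
  have := li_aux (n := n) (D := (Cset Sp Sm v).erase v) (bv v)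
      (fun u => pm (par Sp Sm v u))
      (fun u hu => by
        have : u ≠ v := Finset.ne_of_mem_erase hu
        simp [bv, Pi.single_apply, this])
      (fun u _ => pm_ne_zero _)
  exact this

lemma li_singles (D : Finset (Fin n)) :
    LinearIndependent ℝ (fun u : ↥D => bv u.1) := by
  have := li_aux (n := n) (D := D) 0 (fun _ => 1)
      (fun u _ => rfl) (fun u _ => one_ne_zero)
  simpa using this

/-- card ≤ finrank of a submodule containing an LI family -/
lemma card_le_finrank {ι : Type*} [Fintype ι] {f : ι → Fin n → ℝ}
    {M : Submodule ℝ (Fin n → ℝ)} (hli : LinearIndependent ℝ f) (hmem : ∀ i, f i ∈ M) :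
    Fintype.card ι ≤ Module.finrank ℝ M := by
  have hle : Submodule.span ℝ (Set.range f) ≤ M := by
    rw [Submodule.span_le]; rintro x ⟨i, rfl⟩; exact hmem i
  calc Fintype.card ι = Module.finrank ℝ (Submodule.span ℝ (Set.range f)) :=
        (finrank_span_eq_card hli).symm
    _ ≤ Module.finrank ℝ M := Submodule.finrank_mono hle

lemma finrank_span_image_le (D : Finset (Fin n)) (f : Fin n → (Fin n → ℝ)) :
    Module.finrank ℝ (Submodule.span ℝ (f '' ↑D)) ≤ D.card := by
  rw [← Finset.coe_image]
  exact le_trans (finrank_span_finset_le_card (D.image f)) Finset.card_image_le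

lemma sp_le_span_singles (v : Fin n) :
    sp Sp Sm v ≤ Submodule.span ℝ (bv '' ↑(Cset Sp Sm v)) := by
  rw [sp, Submodule.span_le]
  rintro x ⟨e, he, rfl⟩
  rw [W]
  exact add_mem (Submodule.subset_span ⟨_, he.1, rfl⟩)
    (Submodule.smul_mem _ _ (Submodule.subset_span ⟨_, he.2, rfl⟩))

lemma finrank_sp_le (v : Fin n) :
    Module.finrank ℝ (sp Sp Sm v) ≤ (Cset Sp Sm v).card :=
  le_trans (Submodule.finrank_mono (sp_le_span_singles Sp Sm v))
    (finrank_span_image_le _ bv)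

/-- the number of edges in the component of `v` -/
noncomputable def Ecard (v : Fin n) : ℕ :=
  (Sp.filter (fun p => p.1 ∈ Cset Sp Sm v ∧ p.2 ∈ Cset Sp Sm v)).card +
    (Sm.filter (fun p => p.1 ∈ Cset Sp Sm v ∧ p.2 ∈ Cset Sp Sm v)).card

/-- subtype of a sum splits -/
def sumSubtypeEquiv {A B : Type*} (q : A ⊕ B → Prop) :
    {e : A ⊕ B // q e} ≃ {a : A // q (Sum.inl a)} ⊕ {b : B // q (Sum.inr b)} where
  toFun e := match e with
    | ⟨Sum.inl a, h⟩ => Sum.inl ⟨a, h⟩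
    | ⟨Sum.inr b, h⟩ => Sum.inr ⟨b, h⟩
  invFun e := match e with
    | Sum.inl ⟨a, h⟩ => ⟨Sum.inl a, h⟩
    | Sum.inr ⟨b, h⟩ => ⟨Sum.inr b, h⟩
  left_inv := by rintro ⟨a | b, h⟩ <;> rfl
  right_inv := by rintro (⟨a, h⟩ | ⟨b, h⟩) <;> rfl

lemma card_sub_subtype (S : Finset (Fin n × Fin n)) (q : Fin n × Fin n → Prop) :
    Fintype.card {p : ↥S // q ↑p} = (S.filter q).card := by
  rw [Fintype.card_congr (Equiv.subtypeSubtypeEquivSubtypeInter (· ∈ S) q)]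
  rw [Fintype.card_subtype]
  congr 1
  ext x
  simp

lemma card_edges (v : Fin n) :
    Fintype.card {e : EI Sp Sm // inC Sp Sm v e} = Ecard Sp Sm v := by
  rw [Fintype.card_congr (sumSubtypeEquiv (inC Sp Sm v)), Fintype.card_sum]
  rw [Ecard]
  congr 1
  · refine (card_sub_subtype Sp (fun p => p.1 ∈ Cset Sp Sm v ∧ p.2 ∈ Cset Sp Sm v)).trans ?_
    congr 1
    exact Finset.filter_congr_decidable ..
  · refine (card_sub_subtype Sm (fun p => p.1 ∈ Cset Sp Sm v ∧ p.2 ∈ Cset Sp Sm v)).trans ?_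
    congr 1
    exact Finset.filter_congr_decidable ..


/-- the edge family of the component of `v` -/
noncomputable def WC (v : Fin n) : {e : EI Sp Sm // inC Sp Sm v e} → (Fin n → ℝ) :=
  fun e => W Sp Sm e.1

lemma span_range_WC (v : Fin n) :
    Submodule.span ℝ (Set.range (WC Sp Sm v)) = sp Sp Sm v := by
  rw [sp]
  congr 1
  have : WC Sp Sm v = W Sp Sm ∘ Subtype.val := rfl
  rw [this, Set.range_comp, Subtype.range_coe_subtype]

lemma finrank_range_WC (v : Fin n) :
    (Set.range (WC Sp Sm v)).finrank ℝ = Module.finrank ℝ (sp Sp Sm v) := by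
  rw [Set.finrank, span_range_WC]

lemma par_unique {v : Fin n} (hbal : ¬ Relation.TransGen (Prel Sp Sm) (v, false) (v, true))
    {u : Fin n} {p : Bool} (h : Relation.ReflTransGen (Prel Sp Sm) (v, false) (u, p)) :
    p = par Sp Sm v u := by
  by_contra hne
  have hu : u ∈ Cset Sp Sm v := (mem_Cset Sp Sm).2 (walk_proj Sp Sm h)
  have h2 := par_reach Sp Sm hu
  cases p with
  | false =>
      have hpar : par Sp Sm v u = true := by
        cases hq : par Sp Sm v u
        · exact absurd hq.symm hne
        · rfl
      rw [hpar] at h2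
      exact hbal (odd_of_both Sp Sm h h2)
  | true =>
      have hpar : par Sp Sm v u = false := by
        cases hq : par Sp Sm v u
        · rfl
        · exact absurd hq.symm hne
      rw [hpar] at h2
      exact hbal (odd_of_both Sp Sm h2 h)

lemma edge_hvec {v : Fin n} (hbal : ¬ Relation.TransGen (Prel Sp Sm) (v, false) (v, true))
    {e : EI Sp Sm} (he : inC Sp Sm v e) :
    W Sp Sm e = pm (par Sp Sm v (ea Sp Sm e)) •
      (hvec Sp Sm v (ea Sp Sm e) - hvec Sp Sm v (eb Sp Sm e)) := by
  cases e with
  | inl p =>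
      have hmem : ((p : Fin n × Fin n).1, (p : Fin n × Fin n).2) ∈ Sp := by
        simpa using p.2
      have hstep : Prel Sp Sm ((p : Fin n × Fin n).1, par Sp Sm v (p : Fin n × Fin n).1)
          ((p : Fin n × Fin n).2, par Sp Sm v (p : Fin n × Fin n).1) :=
        Or.inl ⟨Or.inl hmem, rfl⟩
      have hreach := (par_reach Sp Sm he.1).tail hstep
      have hpar := par_unique Sp Sm hbal hreach
      show bv _ + es Sp Sm _ • bv _ = _
      rw [hvec, hvec]
      have hea : ea Sp Sm (Sum.inl p) = (p : Fin n × Fin n).1 := rfl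
      have heb : eb Sp Sm (Sum.inl p) = (p : Fin n × Fin n).2 := rfl
      rw [hea, heb, ← hpar]
      show _ + (-1 : ℝ) • _ = _
      rcases pm_cases (par Sp Sm v (p : Fin n × Fin n).1) with h | h <;> rw [h] <;> module
  | inr p =>
      have hmem : ((p : Fin n × Fin n).1, (p : Fin n × Fin n).2) ∈ Sm := by
        simpa using p.2
      have hstep : Prel Sp Sm ((p : Fin n × Fin n).1, par Sp Sm v (p : Fin n × Fin n).1)
          ((p : Fin n × Fin n).2, !(par Sp Sm v (p : Fin n × Fin n).1)) :=
        Or.inr ⟨Or.inl hmem, rfl⟩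
      have hreach := (par_reach Sp Sm he.1).tail hstep
      have hpar := par_unique Sp Sm hbal hreach
      show bv _ + es Sp Sm _ • bv _ = _
      rw [hvec, hvec]
      have hea : ea Sp Sm (Sum.inr p) = (p : Fin n × Fin n).1 := rfl
      have heb : eb Sp Sm (Sum.inr p) = (p : Fin n × Fin n).2 := rfl
      rw [hea, heb, ← hpar, pm_not]
      show _ + (1 : ℝ) • _ = _
      rcases pm_cases (par Sp Sm v (p : Fin n × Fin n).1) with h | h <;> rw [h] <;> module

lemma finrank_sp_le_balanced {v : Fin n}
    (hbal : ¬ Relation.TransGen (Prel Sp Sm) (v, false) (v, true)) :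
    Module.finrank ℝ (sp Sp Sm v) ≤ (Cset Sp Sm v).card - 1 := by
  have hle : sp Sp Sm v ≤ Submodule.span ℝ (hvec Sp Sm v '' ↑(Cset Sp Sm v)) := by
    rw [sp, Submodule.span_le]
    rintro x ⟨e, he, rfl⟩
    rw [edge_hvec Sp Sm hbal he]
    exact Submodule.smul_mem _ _ (sub_mem
      (Submodule.subset_span ⟨_, he.1, rfl⟩)
      (Submodule.subset_span ⟨_, he.2, rfl⟩))
  have himg : hvec Sp Sm v '' ↑(Cset Sp Sm v) =
      insert 0 (hvec Sp Sm v '' ↑((Cset Sp Sm v).erase v)) := by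
    conv_lhs => rw [← Finset.insert_erase (self_mem_Cset Sp Sm v)]
    rw [Finset.coe_insert, Set.image_insert_eq, hvec_self]
  calc Module.finrank ℝ (sp Sp Sm v)
      ≤ Module.finrank ℝ (Submodule.span ℝ (hvec Sp Sm v '' ↑(Cset Sp Sm v))) :=
        Submodule.finrank_mono hle
    _ = Module.finrank ℝ (Submodule.span ℝ (hvec Sp Sm v '' ↑((Cset Sp Sm v).erase v))) := by
        rw [himg, Submodule.span_insert_zero]
    _ ≤ ((Cset Sp Sm v).erase v).card := finrank_span_image_le _ _
    _ = (Cset Sp Sm v).card - 1 := Finset.card_erase_of_mem (self_mem_Cset Sp Sm v)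

lemma hlb_tree (v : Fin n) :
    (Cset Sp Sm v).card - 1 ≤ Module.finrank ℝ (sp Sp Sm v) := by
  have hm : ∀ u : ↥((Cset Sp Sm v).erase v), hvec Sp Sm v u.1 ∈ sp Sp Sm v :=
    fun u => hvec_mem Sp Sm (Finset.mem_of_mem_erase u.2)
  have := card_le_finrank (li_hvec Sp Sm v) hm
  rwa [Fintype.card_coe, Finset.card_erase_of_mem (self_mem_Cset Sp Sm v)] at this

lemma propA (v : Fin n) (hLI : LinearIndependent ℝ (WC Sp Sm v)) :
    Ecard Sp Sm v = (Cset Sp Sm v).card - 1 ∨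
      (Ecard Sp Sm v = (Cset Sp Sm v).card ∧ ∃ u ∈ Cset Sp Sm v,
        Relation.TransGen (Prel Sp Sm) (u, false) (u, true)) := by
  have hcardC : 1 ≤ (Cset Sp Sm v).card :=
    Finset.card_pos.2 ⟨v, self_mem_Cset Sp Sm v⟩
  have hfrk : Ecard Sp Sm v = Module.finrank ℝ (sp Sp Sm v) := by
    have h := linearIndependent_iff_card_eq_finrank_span.1 hLI
    rw [card_edges, finrank_range_WC] at h
    exact h
  have hub := finrank_sp_le Sp Sm v
  have hlb := hlb_tree Sp Sm v
  by_cases hE : Ecard Sp Sm v = (Cset Sp Sm v).card - 1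
  · exact Or.inl hE
  · have hE2 : Ecard Sp Sm v = (Cset Sp Sm v).card := by omega
    refine Or.inr ⟨hE2, ?_⟩
    by_contra hodd
    push_neg at hodd
    have hbal := hodd v (self_mem_Cset Sp Sm v)
    have := finrank_sp_le_balanced Sp Sm hbal
    omega

lemma propB (v : Fin n)
    (hcond : Ecard Sp Sm v = (Cset Sp Sm v).card - 1 ∨
      (Ecard Sp Sm v = (Cset Sp Sm v).card ∧ ∃ u ∈ Cset Sp Sm v,
        Relation.TransGen (Prel Sp Sm) (u, false) (u, true))) :
    LinearIndependent ℝ (WC Sp Sm v) := by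
  have hcardC : 1 ≤ (Cset Sp Sm v).card :=
    Finset.card_pos.2 ⟨v, self_mem_Cset Sp Sm v⟩
  apply linearIndependent_iff_card_eq_finrank_span.mpr
  rw [card_edges, finrank_range_WC]
  have hub : Module.finrank ℝ (sp Sp Sm v) ≤ Ecard Sp Sm v := by
    have h := finrank_range_le_card (R := ℝ) (WC Sp Sm v)
    rwa [finrank_range_WC, card_edges] at h
  rcases hcond with hE | ⟨hE, u0, hu0, hodd⟩
  · have hlb := hlb_tree Sp Sm v
    omega
  · have h2e : bv u0 + pm true • bv u0 ∈ sp Sp Sm u0 :=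
      memA Sp Sm (x := (u0, true)) hodd.to_reflTransGen
    rw [sp_congr Sp Sm hu0] at h2e
    have hbu0 : bv u0 ∈ sp Sp Sm v := by
      have heq : bv u0 = (2⁻¹ : ℝ) • (bv u0 + pm true • bv u0) := by
        rw [pm_true]; module
      rw [heq]; exact Submodule.smul_mem _ _ h2e
    have hbv : bv v ∈ sp Sp Sm v := by
      have h := hvec_mem Sp Sm hu0
      have heq : bv v = hvec Sp Sm v u0 - pm (par Sp Sm v u0) • bv u0 := by
        rw [hvec]; module
      rw [heq]; exact sub_mem h (Submodule.smul_mem _ _ hbu0)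
    have hall : ∀ u : ↥(Cset Sp Sm v), bv u.1 ∈ sp Sp Sm v := by
      rintro ⟨u, hu⟩
      have h := hvec_mem Sp Sm hu
      have heq : bv u = pm (par Sp Sm v u) • (hvec Sp Sm v u - bv v) := by
        rw [hvec]
        rcases pm_cases (par Sp Sm v u) with hh | hh <;> rw [hh] <;> module
      rw [heq]
      exact Submodule.smul_mem _ _ (sub_mem h hbv)
    have hlb := card_le_finrank (li_singles (Cset Sp Sm v)) hall
    rw [Fintype.card_coe] at hlb
    omega


lemma edge_Rrel (e : EI Sp Sm) : Rrel Sp Sm (ea Sp Sm e) (eb Sp Sm e) := by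
  cases e with
  | inl p => exact Or.inl p.2
  | inr p => exact Or.inr (Or.inr (Or.inl p.2))

lemma inC_of_ea {v : Fin n} {e : EI Sp Sm} (h : ea Sp Sm e ∈ Cset Sp Sm v) :
    inC Sp Sm v e :=
  ⟨h, (mem_Cset Sp Sm).2 (((mem_Cset Sp Sm).1 h).tail (edge_Rrel Sp Sm e))⟩

lemma inC_of_eb {v : Fin n} {e : EI Sp Sm} (h : eb Sp Sm e ∈ Cset Sp Sm v) :
    inC Sp Sm v e :=
  ⟨(mem_Cset Sp Sm).2 (((mem_Cset Sp Sm).1 h).tail (Rrel_symm Sp Sm (edge_Rrel Sp Sm e))), h⟩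

lemma edge_inC (e : EI Sp Sm) : inC Sp Sm (ea Sp Sm e) e :=
  inC_of_ea Sp Sm (self_mem_Cset Sp Sm _)

lemma W_apply_zero {e : EI Sp Sm} {u : Fin n} (ha : ea Sp Sm e ≠ u) (hb : eb Sp Sm e ≠ u) :
    W Sp Sm e u = 0 := by
  have ha' : ¬ (u = ea Sp Sm e) := fun hh => ha hh.symm
  have hb' : ¬ (u = eb Sp Sm e) := fun hh => hb hh.symm
  simp [W, bv, Pi.single_apply, ha', hb']

lemma restrict_dep (v : Fin n) (g : EI Sp Sm → ℝ)
    (hg : ∑ e, g e • W Sp Sm e = 0) :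
    ∑ e : {e : EI Sp Sm // inC Sp Sm v e}, g e.1 • W Sp Sm e.1 = 0 := by
  classical
  funext u
  show (∑ e : {e : EI Sp Sm // inC Sp Sm v e}, g e.1 • W Sp Sm e.1) u = (0 : ℝ)
  have htot := congrFun hg u
  simp only [Finset.sum_apply, Pi.zero_apply] at htot
  have hsub := Finset.sum_subtype (p := fun e => inC Sp Sm v e) (F := inferInstance)
      (Finset.univ.filter (fun e => inC Sp Sm v e))
      (fun x => by simp) (fun e => (g e • W Sp Sm e) u)
  rw [Finset.sum_apply, ← hsub]
  by_cases hu : u ∈ Cset Sp Sm v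
  · have hz : ∑ e ∈ Finset.univ.filter (fun e => ¬ inC Sp Sm v e),
        (g e • W Sp Sm e) u = 0 := by
      apply Finset.sum_eq_zero
      intro e he
      rw [Finset.mem_filter] at he
      have ha : ea Sp Sm e ≠ u := fun hh => he.2 (inC_of_ea Sp Sm (hh ▸ hu))
      have hb : eb Sp Sm e ≠ u := fun hh => he.2 (inC_of_eb Sp Sm (hh ▸ hu))
      simp [W_apply_zero Sp Sm ha hb]
    have hsplit := Finset.sum_filter_add_sum_filter_not Finset.univ
        (fun e => inC Sp Sm v e) (fun e => (g e • W Sp Sm e) u)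
    rw [hz, add_zero] at hsplit
    rw [hsplit]
    exact htot
  · apply Finset.sum_eq_zero
    intro e he
    rw [Finset.mem_filter] at he
    have ha : ea Sp Sm e ≠ u := fun hh => hu (hh ▸ he.2.1)
    have hb : eb Sp Sm e ≠ u := fun hh => hu (hh ▸ he.2.2)
    simp [W_apply_zero Sp Sm ha hb]

end Stmt13Aux

/-- Let `S` be a set of positive roots of `D n`: `b i - b j` ("plus" roots, recorded in
`Sp`) and `b i + b j` ("minus" roots, recorded in `Sm`) with `i < j`.  Then `S` is linearly
independent iff every connected component `C` of the signed graph `Γ(S)` is either a tree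
(`e(C) = v(C) - 1`) or has exactly one cycle (`e(C) = v(C)`) and that cycle is odd, i.e.
contains an odd number of "minus" edges; the latter is expressed by the existence of a
closed walk of odd sign, via the parity-tracking step relation on `Fin n × Bool`. -/
theorem stmt_13 (n : ℕ) (Sp Sm : Finset (Fin n × Fin n))
    (hSp : ∀ p ∈ Sp, p.1 < p.2) (hSm : ∀ p ∈ Sm, p.1 < p.2) :
    LinearIndependent ℝ
        (Sum.elim
          (fun p : ↥Sp => (Pi.single (p : Fin n × Fin n).1 (1 : ℝ) -
            Pi.single (p : Fin n × Fin n).2 (1 : ℝ) : Fin n → ℝ))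
          (fun p : ↥Sm => (Pi.single (p : Fin n × Fin n).1 (1 : ℝ) +
            Pi.single (p : Fin n × Fin n).2 (1 : ℝ) : Fin n → ℝ))) ↔
      (∀ v : Fin n,
        (fun C : Finset (Fin n) =>
          (fun eC : ℕ =>
            -- tree component
            eC = C.card - 1 ∨
            -- unicyclic component with an odd cycle
            (eC = C.card ∧ ∃ u ∈ C,
              Relation.TransGen
                (fun x y : Fin n × Bool =>
                  (((x.1, y.1) ∈ Sp ∨ (y.1, x.1) ∈ Sp) ∧ y.2 = x.2) ∨
                  (((x.1, y.1) ∈ Sm ∨ (y.1, x.1) ∈ Sm) ∧ y.2 = !x.2))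
                (u, false) (u, true)))
          ((Sp.filter (fun p => p.1 ∈ C ∧ p.2 ∈ C)).card +
            (Sm.filter (fun p => p.1 ∈ C ∧ p.2 ∈ C)).card))
        (univ.filter (fun u => Relation.ReflTransGen
          (fun a b : Fin n =>
            (a, b) ∈ Sp ∨ (b, a) ∈ Sp ∨ (a, b) ∈ Sm ∨ (b, a) ∈ Sm) v u))) := by
  rw [Stmt13Aux.W_eq Sp Sm]
  constructor
  · intro hLI v
    show Stmt13Aux.Ecard Sp Sm v = (Stmt13Aux.Cset Sp Sm v).card - 1 ∨
      (Stmt13Aux.Ecard Sp Sm v = (Stmt13Aux.Cset Sp Sm v).card ∧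
        ∃ u ∈ Stmt13Aux.Cset Sp Sm v,
          Relation.TransGen (Stmt13Aux.Prel Sp Sm) (u, false) (u, true))
    exact Stmt13Aux.propA Sp Sm v (hLI.comp Subtype.val Subtype.val_injective)
  · intro hcond
    have hcond' : ∀ v : Fin n,
        Stmt13Aux.Ecard Sp Sm v = (Stmt13Aux.Cset Sp Sm v).card - 1 ∨
        (Stmt13Aux.Ecard Sp Sm v = (Stmt13Aux.Cset Sp Sm v).card ∧
          ∃ u ∈ Stmt13Aux.Cset Sp Sm v,
            Relation.TransGen (Stmt13Aux.Prel Sp Sm) (u, false) (u, true)) := hcond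
    rw [Fintype.linearIndependent_iff]
    intro g hg e0
    have hg' := Stmt13Aux.restrict_dep Sp Sm (Stmt13Aux.ea Sp Sm e0) g hg
    have hLIC := Stmt13Aux.propB Sp Sm (Stmt13Aux.ea Sp Sm e0)
      (hcond' (Stmt13Aux.ea Sp Sm e0))
    exact Fintype.linearIndependent_iff.1 hLIC (fun e => g e.1) hg'
      ⟨e0, Stmt13Aux.edge_inC Sp Sm e0⟩
end
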